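/- If D is a real n×n matrix with tr(D) = 0, then det(∑_{m=0}^∞ (−1)^m D^m/(m+1)!) = det(∑_{m=0}^∞ D^{2m}/(4^m (2m+1)!)); that is, the Jacobian det((1 − e^{−D})/D) of the closed-orbit map equals det(sinh(D/2)/(D/2)). -/

import Mathlib

/-!
Both series are evaluations at `D` of formal power series, `(1 - e^{-X})/X` and
`sinh(X/2)/(X/2)`, and the formal identity `e^{-X/2} (e^{X/2} - e^{-X/2}) = 1 - e^{-X}`,
divided by `X`, factors the first as `e^{-X/2}` times the second. Evaluation at `D` is
multiplicative on these everywhere convergent series (Cauchy product), so the left-hand matrix is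
`exp(-D/2)` times the right-hand one, and `det (exp (-D/2)) = e^{-tr D / 2} = 1`.
-/

open Matrix PowerSeries
open scoped Nat

section Formal

variable (K : Type*) [Field K] [CharZero K]

noncomputable def oneSubExpNegDivX : K⟦X⟧ := mk fun m => (-1) ^ m * ((m + 1)! : K)⁻¹

noncomputable def sinhHalfDivHalfX : K⟦X⟧ :=
  expand 2 two_ne_zero (mk fun m => ((4 ^ m * (2 * m + 1)! : K))⁻¹)

theorem X_mul_oneSubExpNegDivX : X * oneSubExpNegDivX K = 1 - rescale (-1) (exp K) := by
  ext (_ | m)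
  · simp only [coeff_zero_X_mul, map_sub, coeff_rescale, coeff_one, coeff_exp]
    simp
  · simp [coeff_succ_X_mul, oneSubExpNegDivX, coeff_one, pow_succ]

theorem X_mul_sinhHalfDivHalfX :
    X * sinhHalfDivHalfX K = rescale 2⁻¹ (exp K) - rescale (-2⁻¹) (exp K) := by
  ext (_ | n)
  · simp only [coeff_zero_X_mul, map_sub, coeff_rescale, coeff_exp]
    simp
  rw [coeff_succ_X_mul, map_sub, coeff_rescale, coeff_rescale, coeff_exp]
  obtain ⟨m, rfl | rfl⟩ := n.even_or_odd'
  · rw [sinhHalfDivHalfX, coeff_expand_mul, coeff_mk, Odd.neg_pow ⟨m, rfl⟩, neg_mul,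
      sub_neg_eq_add, ← two_mul, pow_succ, pow_mul, show ((2 : K)⁻¹) ^ 2 = 4⁻¹ by norm_num,
      inv_pow, map_div₀, map_one, map_natCast]
    ring
  · rw [sinhHalfDivHalfX, coeff_expand_of_not_dvd _ _ _ (by omega)]
    simp [pow_succ, pow_mul]

theorem oneSubExpNegDivX_eq_rescale_exp_mul_sinhHalfDivHalfX :
    oneSubExpNegDivX K = rescale (-2⁻¹) (exp K) * sinhHalfDivHalfX K := by
  apply X_mul_cancel
  rw [mul_left_comm, X_mul_sinhHalfDivHalfX, mul_sub, exp_mul_exp_eq_exp_add,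
    exp_mul_exp_eq_exp_add, X_mul_oneSubExpNegDivX]
  norm_num

end Formal

section Evaluation

noncomputable def tsumEval {R 𝔸 : Type*} [CommSemiring R] [Semiring 𝔸] [Algebra R 𝔸]
    [TopologicalSpace 𝔸] (f : R⟦X⟧) (x : 𝔸) : 𝔸 :=
  ∑' k, coeff k f • x ^ k

theorem tsumEval_expand {R 𝔸 : Type*} [CommRing R] [Semiring 𝔸] [Algebra R 𝔸]
    [TopologicalSpace 𝔸] (p : ℕ) (hp : p ≠ 0) (f : R⟦X⟧) (x : 𝔸) :
    tsumEval (expand p hp f) x = ∑' m, coeff m f • x ^ (p * m) := by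
  have hsupp : Function.support (fun k => coeff k (expand p hp f) • x ^ k) ⊆ Set.range (p * ·) :=
    Function.support_subset_iff'.2 fun k hk => by
      rw [coeff_expand_of_not_dvd p hp f fun ⟨m, hm⟩ => hk ⟨m, hm.symm⟩, zero_smul]
  rw [tsumEval, ← (mul_right_injective₀ hp).tsum_eq hsupp]
  simp only [coeff_expand_mul]

theorem abs_coeff_rescale_exp_le {a : ℝ} (ha : |a| ≤ 1) (k : ℕ) :
    |coeff k (rescale a (exp ℝ))| ≤ (k ! : ℝ)⁻¹ := by
  rw [coeff_rescale, coeff_exp, map_div₀, map_one, map_natCast, abs_mul, abs_pow,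
    one_div, abs_of_pos (a := (k ! : ℝ)⁻¹) (by positivity)]
  exact mul_le_of_le_one_left (by positivity) (pow_le_one₀ (abs_nonneg a) ha)

theorem abs_coeff_sinhHalfDivHalfX_le (k : ℕ) :
    |coeff k (sinhHalfDivHalfX ℝ)| ≤ (k ! : ℝ)⁻¹ := by
  rw [sinhHalfDivHalfX, coeff_expand]
  split_ifs with h
  · obtain ⟨m, rfl⟩ := h
    rw [Nat.mul_div_cancel_left _ two_pos, coeff_mk, abs_of_pos (by positivity)]
    gcongr
    calc ((2 * m)! : ℝ) ≤ (2 * m + 1)! := by exact_mod_cast Nat.factorial_le (by omega)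
      _ ≤ 4 ^ m * (2 * m + 1)! := le_mul_of_one_le_left (by positivity) (one_le_pow₀ (by norm_num))
  · rw [abs_zero]
    positivity

variable {𝔸 : Type*} [NormedRing 𝔸] [NormedAlgebra ℝ 𝔸]

theorem summable_norm_coeff_smul_pow {f : ℝ⟦X⟧} (hf : ∀ k, |coeff k f| ≤ (k ! : ℝ)⁻¹) (x : 𝔸) :
    Summable fun k => ‖coeff k f • x ^ k‖ :=
  (NormedSpace.norm_expSeries_summable' (𝕂 := ℝ) x).of_nonneg_of_le (fun _ => norm_nonneg _)
    fun k => by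
      rw [norm_smul, norm_smul, Real.norm_eq_abs, Real.norm_eq_abs,
        abs_of_nonneg (a := (k ! : ℝ)⁻¹) (by positivity)]
      exact mul_le_mul_of_nonneg_right (hf k) (norm_nonneg _)

theorem tsumEval_mul [CompleteSpace 𝔸] {f g : ℝ⟦X⟧} {x : 𝔸}
    (hf : Summable fun k => ‖coeff k f • x ^ k‖) (hg : Summable fun k => ‖coeff k g • x ^ k‖) :
    tsumEval (f * g) x = tsumEval f x * tsumEval g x := by
  rw [tsumEval, tsumEval, tsumEval, tsum_mul_tsum_eq_tsum_sum_antidiagonal_of_summable_norm hf hg]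
  congr with m
  rw [coeff_mul, Finset.sum_smul]
  refine Finset.sum_congr rfl fun p hp => ?_
  rw [smul_mul_smul_comm, ← pow_add, Finset.HasAntidiagonal.mem_antidiagonal.1 hp]

theorem tsumEval_rescale_exp (a : ℝ) (x : 𝔸) :
    tsumEval (rescale a (exp ℝ)) x = NormedSpace.exp (a • x) := by
  rw [NormedSpace.exp_eq_tsum ℝ, tsumEval]
  congr with k
  rw [coeff_rescale, coeff_exp, smul_pow, smul_smul, map_div₀, map_one, map_natCast, one_div,
    mul_comm]

end Evaluation

section DetExp

theorem Equiv.Perm.exists_ne_apply_ne_of_ne_one {α : Type*} {σ : Equiv.Perm α} (hσ : σ ≠ 1)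
    (i : α) : ∃ j ≠ i, σ j ≠ j := by
  by_contra! h
  refine hσ (Equiv.ext fun k => ?_)
  by_cases hk : k = i
  · subst hk
    by_contra hki
    exact hki (σ.injective (h _ hki))
  · exact h k hk

variable {n : Type*} [Fintype n] [DecidableEq n]

theorem prod_erase_one_apply_perm_eq_zero {R : Type*} [CommMonoidWithZero R] {σ : Equiv.Perm n}
    (hσ : σ ≠ 1) (i : n) : ∏ j ∈ Finset.univ.erase i, (1 : Matrix n n R) (σ j) j = 0 := by
  obtain ⟨j, hji, hj⟩ := σ.exists_ne_apply_ne_of_ne_one hσ i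
  exact Finset.prod_eq_zero (Finset.mem_erase.2 ⟨hji, Finset.mem_univ _⟩) (one_apply_ne hj)

theorem hasDerivAt_det_of_eq_one {𝕜 : Type*} [NontriviallyNormedField 𝕜] {M : 𝕜 → Matrix n n 𝕜}
    {M' : Matrix n n 𝕜} {t : 𝕜}
    (hM : ∀ i j, HasDerivAt (fun s => M s i j) (M' i j) t) (h1 : M t = 1) :
    HasDerivAt (fun s => (M s).det) M'.trace t := by
  -- In the Leibniz expansion at `M t = 1`, only the identity permutation has a nonzero derivative.
  simp_rw [det_apply']
  refine (HasDerivAt.fun_sum fun σ _ =>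
    (HasDerivAt.fun_finsetProd fun i _ => hM (σ i) i).const_mul
      ((Equiv.Perm.sign σ : ℤ) : 𝕜)).congr_deriv ?_
  rw [Finset.sum_eq_single 1 (fun σ _ hσ => by simp [h1, prod_erase_one_apply_perm_eq_zero hσ])
    (by simp)]
  simp [h1, trace, one_apply]

-- Any Banach algebra norm would do: `exp` on matrices does not depend on it.
attribute [local instance] Matrix.linftyOpNormedRing Matrix.linftyOpNormedAlgebra

open NormedSpace

theorem hasDerivAt_det_exp_smul (A : Matrix n n ℝ) (t : ℝ) :
    HasDerivAt (fun s : ℝ => (exp (s • A)).det) (A.trace * (exp (t • A)).det) t := by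
  have h0 : HasDerivAt (fun s : ℝ => (exp (s • A)).det) A.trace 0 := by
    refine hasDerivAt_det_of_eq_one (fun i j => ?_) (by rw [zero_smul, exp_zero])
    have := (entryLinearMap ℝ ℝ i j).toContinuousLinearMap.hasFDerivAt.comp_hasDerivAt _
      (hasDerivAt_exp_smul_const A (0 : ℝ))
    rw [zero_smul, exp_zero, one_mul] at this
    exact this
  have hshift : (fun s : ℝ => (exp (s • A)).det) =
      fun s => (exp (t • A)).det * (exp ((s - t) • A)).det := by
    funext s
    rw [← det_mul, ← Matrix.exp_add_of_commute _ _ (((Commute.refl A).smul_left _).smul_right _),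
      ← add_smul, add_sub_cancel]
  rw [hshift, mul_comm]
  exact (HasDerivAt.comp_sub_const t t (by rwa [sub_self])).const_mul _

theorem det_exp (A : Matrix n n ℝ) : (exp A).det = Real.exp A.trace := by
  have hg : ∀ s, HasDerivAt (fun s : ℝ => (exp (s • A)).det * Real.exp (-(s * A.trace))) 0 s :=
    fun s => ((hasDerivAt_det_exp_smul A s).fun_mul
      (hasDerivAt_mul_const A.trace).neg.exp).congr_deriv (by ring)
  have := is_const_of_deriv_eq_zero (fun s => (hg s).differentiableAt) (fun s => (hg s).deriv) 1 0
  simp only [one_smul, one_mul, zero_smul, exp_zero, det_one, zero_mul, neg_zero,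
    Real.exp_zero, mul_one] at this
  rw [← mul_inv_eq_one₀ (Real.exp_pos _).ne', ← Real.exp_neg, this]

theorem det_tsumEval_oneSubExpNegDivX (D : Matrix n n ℝ) (hD : D.trace = 0) :
    (tsumEval (oneSubExpNegDivX ℝ) D).det = (tsumEval (sinhHalfDivHalfX ℝ) D).det := by
  have hmul : tsumEval (oneSubExpNegDivX ℝ) D =
      exp ((-2⁻¹ : ℝ) • D) * tsumEval (sinhHalfDivHalfX ℝ) D := by
    rw [oneSubExpNegDivX_eq_rescale_exp_mul_sinhHalfDivHalfX]
    exact (tsumEval_mul (summable_norm_coeff_smul_pow (abs_coeff_rescale_exp_le (by norm_num)) D)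
      (summable_norm_coeff_smul_pow abs_coeff_sinhHalfDivHalfX_le D)).trans
      (congrArg (· * _) (tsumEval_rescale_exp _ _))
  rw [hmul, det_mul, det_exp, trace_smul, hD, smul_zero, Real.exp_zero, one_mul]

end DetExp

/-- If `tr D = 0`, then the Jacobian `det((1 - e^{-D})/D)` of the closed-orbit map equals
`det(sinh(D/2)/(D/2))`, both expressed as everywhere convergent matrix power series. -/
theorem statement8 (n : ℕ) (D : Matrix (Fin n) (Fin n) ℝ) (hD : D.trace = 0) :
    (∑' m : ℕ, (((-1 : ℝ) ^ m * ((m + 1).factorial : ℝ)⁻¹)) • D ^ m).det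
      = (∑' m : ℕ, ((4 ^ m * (2 * m + 1).factorial : ℝ))⁻¹ • D ^ (2 * m)).det := by
  have h := det_tsumEval_oneSubExpNegDivX D hD
  rw [sinhHalfDivHalfX, tsumEval_expand] at h
  simpa [tsumEval, oneSubExpNegDivX] using h
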